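/- Let G_* be a rooted graph with root vertex r and let N ≥ 1. (i) If e is an edge of G from r to a vertex s, then X_0(G_*;x_0,…,x_N) = X_0(G_*−e;x_0,…,x_N) − x_0·X_0(G_{e*};x_0,…,x_N), where G_*−e is G_* with edge e deleted (same root r), and G_{e*} is obtained from G_* by contracting e, identifying r and s into a single vertex which becomes the new root. (ii) If no edge of G touches r, then X_0(G_*;x_0,…,x_N) = x_0·X_{G−r}(x_0,…,x_N), where G−r is the unrooted graph obtained from G by deleting the isolated root vertex r. -/
import Mathlib


open MvPolynomial

attribute [local instance 10] Classical.propDecidable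

/-- The finset of proper colorings of `G` with color set `Fin C`. -/
noncomputable def properColorings {V : Type} [Fintype V] (G : SimpleGraph V) (C : ℕ) :
    Finset (V → Fin C) :=
  Finset.univ.filter fun κ => ∀ u w, G.Adj u w → κ u ≠ κ w

/-- Chromatic symmetric polynomial of `G` with `C` colors, one variable per color. -/
noncomputable def XG {V : Type} [Fintype V] (G : SimpleGraph V) (C : ℕ) :
    MvPolynomial (Fin C) ℚ :=
  ∑ κ ∈ properColorings G C, ∏ v : V, X (κ v)

/-- `X_0(G_*; x_0,…,x_N)`: weighted sum over proper colorings with color set `{0,…,N}`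
in which the root `r` gets color `0`. -/
noncomputable def X0 {V : Type} [Fintype V] (G : SimpleGraph V) (r : V) (N : ℕ) :
    MvPolynomial (Fin (N+1)) ℚ :=
  ∑ κ ∈ (properColorings G (N+1)).filter (fun κ => κ r = 0), ∏ v : V, X (κ v)

/-- The contraction of the edge `{r, u}` of `G`: the vertex `u` is deleted and the merged
vertex is `r`, which becomes adjacent to all former neighbors of `u`. -/
def contractEdge {V : Type} (G : SimpleGraph V) (r u : V) : SimpleGraph {v : V // v ≠ u} :=
  SimpleGraph.fromRel (fun a b => G.Adj a.1 b.1 ∨ (a.1 = r ∧ G.Adj u b.1))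

/-- Splitting off the factor of a distinguished vertex from a weight product. -/
lemma wt_split {V : Type} [Fintype V] {N : ℕ} (κ : V → Fin (N+1)) (u : V)
    (p : V → Prop) [Fintype (Subtype p)] (hp : ∀ v, p v ↔ v ≠ u) :
    ∏ v : V, (X (κ v) : MvPolynomial (Fin (N+1)) ℚ)
      = X (κ u) * ∏ v : Subtype p, X (κ v.1) := by
  classical
  rw [← Finset.mul_prod_erase Finset.univ _ (Finset.mem_univ u)]
  congr 1
  exact Finset.prod_subtype _ (fun x => by simp [hp]) _

/-- Deletion–contraction recursion for the rooted chromatic polynomial: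
(i) for an edge `e = {r, u}` at the root, `X_0(G_*) = X_0(G_*−e) − x_0·X_0(G_{e*})`;
(ii) if no edge touches the root `r`, then `X_0(G_*) = x_0·X_{G−r}(x_0,…,x_N)`. -/
theorem stmt12 {V : Type} [Fintype V] (G : SimpleGraph V) (r : V) (N : ℕ) (hN : 1 ≤ N) :
    (∀ u : V, ∀ h : G.Adj r u,
      X0 G r N =
        X0 (G.deleteEdges {s(r, u)}) r N
          - X 0 * X0 (contractEdge G r u) ⟨r, h.ne⟩ N) ∧
    ((∀ v : V, ¬ G.Adj r v) →
      X0 G r N = X 0 * XG (G.induce {v : V | v ≠ r}) (N + 1)) := by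
  constructor
  · intro u hadj
    have hru : r ≠ u := hadj.ne
    have key1 : ((properColorings (G.deleteEdges {s(r,u)}) (N+1)).filter
          (fun κ => κ r = 0)).filter (fun κ => κ u ≠ 0)
        = (properColorings G (N+1)).filter (fun κ => κ r = 0) := by
      ext κ
      simp only [Finset.mem_filter, properColorings, Finset.mem_univ, true_and]
      constructor
      · rintro ⟨⟨hp, hr⟩, hu⟩
        refine ⟨fun a b hab => ?_, hr⟩
        by_cases he : s(a,b) = s(r,u)
        · rcases Sym2.eq_iff.1 he with ⟨ha, hb⟩ | ⟨ha, hb⟩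
          · subst ha; subst hb; rw [hr]; exact fun h => hu h.symm
          · subst ha; subst hb; rw [hr]; exact hu
        · exact hp a b (SimpleGraph.deleteEdges_adj.2 ⟨hab, by simpa using he⟩)
      · rintro ⟨hp, hr⟩
        refine ⟨⟨fun a b hab => hp a b (SimpleGraph.deleteEdges_adj.1 hab).1, hr⟩, ?_⟩
        exact fun h => hp r u hadj (by rw [hr, h])
    have hsplit := Finset.sum_filter_add_sum_filter_not
      ((properColorings (G.deleteEdges {s(r,u)}) (N+1)).filter (fun κ => κ r = 0))
      (fun κ => κ u ≠ 0) (fun κ => ∏ v : V, (X (κ v) : MvPolynomial (Fin (N+1)) ℚ))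
    rw [key1] at hsplit
    have key2 : ∑ κ ∈ ((properColorings (G.deleteEdges {s(r,u)}) (N+1)).filter
          (fun κ => κ r = 0)).filter (fun κ => ¬ κ u ≠ 0),
          ∏ v : V, (X (κ v) : MvPolynomial (Fin (N+1)) ℚ)
        = X 0 * X0 (contractEdge G r u) ⟨r, hadj.ne⟩ N := by
      rw [X0, Finset.mul_sum]
      refine Finset.sum_bij' (fun κ _ => fun v => κ v.1)
        (fun κ' _ => fun v => if h : v ≠ u then κ' ⟨v, h⟩ else 0) ?_ ?_ ?_ ?_ ?_
      · -- forward map lands in target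
        intro κ hκ
        simp only [Finset.mem_filter, properColorings, Finset.mem_univ, true_and,
          not_not] at hκ
        obtain ⟨⟨hp, hr⟩, hu0⟩ := hκ
        have main : ∀ a b : {v : V // v ≠ u}, a ≠ b →
            (G.Adj a.1 b.1 ∨ (a.1 = r ∧ G.Adj u b.1)) → κ a.1 ≠ κ b.1 := by
          rintro a b hne (hab | ⟨har, hub⟩)
          · refine hp a.1 b.1 (SimpleGraph.deleteEdges_adj.2 ⟨hab, ?_⟩)
            simp only [Set.mem_singleton_iff, Sym2.eq_iff]
            rintro (⟨-, hb⟩ | ⟨ha, -⟩)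
            · exact b.2 hb
            · exact a.2 ha
          · have hbr : b.1 ≠ r := by
              intro hbr
              exact hne (Subtype.ext (har.trans hbr.symm))
            have hD : (G.deleteEdges {s(r,u)}).Adj u b.1 := by
              refine SimpleGraph.deleteEdges_adj.2 ⟨hub, ?_⟩
              simp only [Set.mem_singleton_iff, Sym2.eq_iff]
              rintro (⟨hur, -⟩ | ⟨-, hbr'⟩)
              · exact hru hur.symm
              · exact hbr hbr'
            have := hp u b.1 hD
            rw [har, hr, ← hu0]
            exact this
        refine Finset.mem_filter.2 ⟨?_, ?_⟩
        · simp only [properColorings, Finset.mem_filter, Finset.mem_univ, true_and]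
          intro a b hab
          rw [contractEdge, SimpleGraph.fromRel_adj] at hab
          obtain ⟨hne, hrel | hrel⟩ := hab
          · exact main a b hne hrel
          · exact (main b a hne.symm hrel).symm
        · exact hr
      · -- backward map lands in source
        intro κ' hκ'
        simp only [Finset.mem_filter, properColorings, Finset.mem_univ, true_and] at hκ'
        obtain ⟨hp, hr0⟩ := hκ'
        have hadjC : ∀ (a b : {v : V // v ≠ u}), a ≠ b →
            (G.Adj a.1 b.1 ∨ (a.1 = r ∧ G.Adj u b.1)) → κ' a ≠ κ' b := by
          intro a b hne hrel
          exact hp a b (by rw [contractEdge, SimpleGraph.fromRel_adj]; exact ⟨hne, Or.inl hrel⟩)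
        simp only [Finset.mem_filter, properColorings, Finset.mem_univ, true_and, not_not]
        refine ⟨⟨?_, ?_⟩, ?_⟩
        · intro a b hab
          obtain ⟨hGab, hmem⟩ := SimpleGraph.deleteEdges_adj.1 hab
          simp only [Set.mem_singleton_iff, Sym2.eq_iff, not_or, not_and] at hmem
          by_cases ha : a = u
          · have hbu : b ≠ u := fun h => hGab.ne (ha.trans h.symm)
            have hbr : b ≠ r := hmem.2 ha
            rw [dif_neg (not_not_intro ha), dif_pos hbu]
            have : κ' ⟨r, hru⟩ ≠ κ' ⟨b, hbu⟩ :=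
              hadjC ⟨r, hru⟩ ⟨b, hbu⟩ (fun h => hbr (congrArg Subtype.val h).symm)
                (Or.inr ⟨rfl, ha ▸ hGab⟩)
            rw [show κ' ⟨r, hru⟩ = 0 from hr0] at this
            exact this
          · by_cases hb : b = u
            · have har : a ≠ r := fun h => (hmem.1 h) hb
              rw [dif_pos ha, dif_neg (not_not_intro hb)]
              have : κ' ⟨r, hru⟩ ≠ κ' ⟨a, ha⟩ :=
                hadjC ⟨r, hru⟩ ⟨a, ha⟩ (fun h => har (congrArg Subtype.val h).symm)
                  (Or.inr ⟨rfl, hb ▸ hGab.symm⟩)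
              rw [show κ' ⟨r, hru⟩ = 0 from hr0] at this
              exact this.symm
            · rw [dif_pos ha, dif_pos hb]
              exact hadjC ⟨a, ha⟩ ⟨b, hb⟩
                (fun h => hGab.ne (congrArg Subtype.val h)) (Or.inl hGab)
        · rw [dif_pos hru]
          exact hr0
        · exact dif_neg (not_not_intro rfl)
      · -- left inverse
        intro κ hκ
        simp only [Finset.mem_filter, properColorings, Finset.mem_univ, true_and,
          not_not] at hκ
        funext v
        by_cases hv : v = u
        · subst hv; simp [hκ.2]
        · simp [hv]
      · -- right inverse
        intro κ' hκ'
        funext v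
        simp [v.2]
      · -- weights agree
        intro κ hκ
        simp only [Finset.mem_filter, properColorings, Finset.mem_univ, true_and,
          not_not] at hκ
        rw [wt_split κ u (fun v => v ≠ u) (fun v => Iff.rfl), hκ.2]
    rw [key2] at hsplit
    rw [X0, X0]
    exact (eq_sub_of_add_eq hsplit)
  · intro hiso
    rw [X0, XG, Finset.mul_sum]
    refine Finset.sum_bij' (fun κ _ => fun v => κ v.1)
      (fun κ' _ => fun v => if h : v ≠ r then κ' ⟨v, h⟩ else 0) ?_ ?_ ?_ ?_ ?_
    · intro κ hκ
      simp only [Finset.mem_filter, properColorings, Finset.mem_univ, true_and] at hκ ⊢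
      intro a b hab
      have : G.Adj a.1 b.1 := by simpa using hab
      exact hκ.1 a.1 b.1 this
    · intro κ' hκ'
      simp only [Finset.mem_filter, properColorings, Finset.mem_univ, true_and] at hκ' ⊢
      constructor
      · intro a b hab
        have har : a ≠ r := fun h => hiso b (h ▸ hab)
        have hbr : b ≠ r := fun h => hiso a (h ▸ hab.symm)
        rw [dif_pos har, dif_pos hbr]
        refine hκ' ⟨a, har⟩ ⟨b, hbr⟩ ?_
        simpa using hab
      · exact dif_neg (not_not_intro rfl)
    · intro κ hκ
      simp only [Finset.mem_filter, properColorings, Finset.mem_univ, true_and] at hκ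
      funext v
      by_cases hv : v = r
      · subst hv; simp [hκ.2]
      · simp [hv]
    · intro κ' hκ'
      funext v
      have hv : (v : V) ≠ r := v.2
      simp [hv]
    · intro κ hκ
      simp only [Finset.mem_filter, properColorings, Finset.mem_univ, true_and] at hκ
      rw [wt_split κ r (fun v => v ∈ {v : V | v ≠ r}) (fun v => Iff.rfl), hκ.2]
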